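/- Let α be real, m a positive integer, and ψ(x) = L_m^{-α-1}(-x). Then on any interval where ψ and ψ' are nonzero, the weight functions W_m^{III,α}(x) = x^α e^{-x}/ψ(x)^2 and W_{m-1}^{III,α-1}(x) = x^{α-1} e^{-x}/ψ'(x)^2 satisfy W_m^{III,α}(x) + m·W_{m-1}^{III,α-1}(x) = -d/dx [ x^α e^{-x} / (ψ(x)·ψ'(x)) ]. -/

import Mathlib

open Finset

/-- Generalized Laguerre polynomial `L_n^α(x) = ∑_{k=0}^n (-1)^k binom(n+α, n-k) x^k / k!`. -/
noncomputable def lag (α : ℝ) (n : ℕ) (x : ℝ) : ℝ :=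
  ∑ k ∈ Finset.range (n + 1),
    (-1 : ℝ) ^ k * (∏ j ∈ Finset.range (n - k), (α + (k : ℝ) + 1 + (j : ℝ))) /
      ((Nat.factorial (n - k) : ℝ) * (Nat.factorial k : ℝ)) * x ^ k

/-- Generalized Laguerre polynomial with integer index, with the convention
`L_n^α := 0` for `n < 0`. -/
noncomputable def lagZ (α : ℝ) (n : ℤ) (x : ℝ) : ℝ :=
  if 0 ≤ n then lag α n.toNat x else 0

/-! The reflected Laguerre polynomial `ψ(x) = L_m^{-α-1}(-x)` solves
`x ψ'' + (x - α) ψ' = m ψ`. Differentiating `x^α e^{-x} / (ψ ψ')` by the quotient rule and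
eliminating `ψ''` with this equation gives the identity. Laguerre's equation
`y L'' + (β + 1 - y) L' + n L = 0` for `L = L_n^β` is, coefficientwise, the recurrence
`(k + 1)(β + k + 1) c_{k+1} = (k - n) c_k` of its coefficients `c_k`. -/

open Polynomial

noncomputable def lagCoeff (β : ℝ) (n k : ℕ) : ℝ :=
  (-1 : ℝ) ^ k * (∏ j ∈ range (n - k), (β + (k : ℝ) + 1 + (j : ℝ))) /
    ((Nat.factorial (n - k) : ℝ) * (Nat.factorial k : ℝ))

noncomputable def lagPoly (β : ℝ) (n : ℕ) : ℝ[X] :=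
  ∑ k ∈ range (n + 1), C (lagCoeff β n k) * X ^ k

lemma lag_eq_eval (β : ℝ) (n : ℕ) : lag β n = fun x => (lagPoly β n).eval x :=
  funext fun x => by simp [lagPoly, lag, eval_finsetSum, lagCoeff]

lemma coeff_lagPoly (β : ℝ) (n k : ℕ) :
    (lagPoly β n).coeff k = if k ≤ n then lagCoeff β n k else 0 := by
  simp [lagPoly, finsetSum_coeff]

lemma lagCoeff_succ (β : ℝ) {n k : ℕ} (hk : k < n) :
    ((k + 1) * (β + k + 1)) * lagCoeff β n (k + 1) = (k - n) * lagCoeff β n k := by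
  obtain ⟨d, rfl⟩ : ∃ d, n = k + d + 1 := ⟨n - k - 1, by omega⟩
  have hd : k + d + 1 - (k + 1) = d := by omega
  have hd' : k + d + 1 - k = d + 1 := by omega
  have shift : ∏ j ∈ range d, (β + k + 1 + ((j + 1 : ℕ) : ℝ)) =
      ∏ j ∈ range d, (β + ((k + 1 : ℕ) : ℝ) + 1 + j) :=
    prod_congr rfl fun j _ => by push_cast; ring
  simp only [lagCoeff, hd, hd', prod_range_succ', ← shift, Nat.factorial_succ, pow_succ]
  push_cast
  field_simp
  ring

lemma coeff_lagPoly_succ (β : ℝ) (n k : ℕ) :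
    ((k + 1) * (β + k + 1)) * (lagPoly β n).coeff (k + 1) = (k - n) * (lagPoly β n).coeff k := by
  rcases lt_trichotomy k n with hk | rfl | hk
  · rw [coeff_lagPoly, coeff_lagPoly, if_pos (Nat.succ_le_of_lt hk), if_pos hk.le,
      lagCoeff_succ β hk]
  · simp [coeff_lagPoly]
  · simp [coeff_lagPoly, hk.not_ge, show ¬k + 1 ≤ n by omega]

lemma lagPoly_ode (β : ℝ) (n : ℕ) :
    X * derivative (derivative (lagPoly β n)) + (C (β + 1) - X) * derivative (lagPoly β n)
      + C (n : ℝ) * lagPoly β n = 0 := by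
  ext k
  have hrec := coeff_lagPoly_succ β n k
  rcases k with _ | k <;>
  · simp only [coeff_add, sub_mul, coeff_sub, coeff_C_mul, coeff_X_mul_zero, coeff_X_mul,
      coeff_derivative, coeff_zero]
    push_cast at hrec ⊢
    linear_combination hrec

lemma contDiff_lag (β : ℝ) (n : ℕ) {k : WithTop ℕ∞} : ContDiff ℝ k (lag β n) := by
  unfold lag
  fun_prop

lemma lag_ode (β : ℝ) (n : ℕ) (y : ℝ) :
    y * deriv (deriv (lag β n)) y + (β + 1 - y) * deriv (lag β n) y + n * lag β n y = 0 := by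
  have h := congrArg (eval y) (lagPoly_ode β n)
  simp only [eval_add, eval_mul, eval_sub, eval_X, eval_C, eval_zero] at h
  have hderiv (p : ℝ[X]) : deriv (fun x => p.eval x) = fun x => p.derivative.eval x :=
    funext fun x => p.deriv
  simpa only [lag_eq_eval, hderiv] using h

lemma ode_comp_neg {L : ℝ → ℝ} {a c : ℝ}
    (hL : ∀ y, y * deriv (deriv L) y + (a - y) * deriv L y + c * L y = 0) (x : ℝ) :
    x * deriv (deriv fun t => L (-t)) x + (x + a) * deriv (fun t => L (-t)) x
      = c * L (-x) := by
  have h1 : deriv (fun t => L (-t)) = fun t => -deriv L (-t) := funext (deriv_comp_neg L)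
  have h2 : deriv (deriv fun t => L (-t)) x = deriv (deriv L) (-x) := by
    rw [h1, deriv.fun_neg, deriv_comp_neg, neg_neg]
  rw [h2, h1]
  linear_combination -hL (-x)

lemma add_weight_eq_neg_deriv_of_ode {ψ : ℝ → ℝ} {α μ x : ℝ} (hx : 0 < x)
    (hψ : DifferentiableAt ℝ ψ x) (hψ' : DifferentiableAt ℝ (deriv ψ) x)
    (h0 : ψ x ≠ 0) (h1 : deriv ψ x ≠ 0)
    (hode : x * deriv (deriv ψ) x + (x - α) * deriv ψ x = μ * ψ x) :
    x ^ α * Real.exp (-x) / ψ x ^ 2 + μ * (x ^ (α - 1) * Real.exp (-x) / deriv ψ x ^ 2)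
      = -deriv (fun t => t ^ α * Real.exp (-t) / (ψ t * deriv ψ t)) x := by
  have hw : HasDerivAt (fun t : ℝ => t ^ α * Real.exp (-t))
      (α * x ^ (α - 1) * Real.exp (-x) + x ^ α * -Real.exp (-x)) x := by
    have hr := Real.hasDerivAt_rpow_const (p := α) (Or.inl hx.ne')
    exact hr.mul (by simpa using (hasDerivAt_neg x).exp)
  have hd := hw.fun_div (hψ.hasDerivAt.fun_mul hψ'.hasDerivAt) (mul_ne_zero h0 h1)
  rw [hd.deriv]
  have hxα : x ^ α = x ^ (α - 1) * x := by
    rw [← Real.rpow_add_one hx.ne', sub_add_cancel]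
  have hψ'' : deriv (deriv ψ) x = (μ * ψ x - (x - α) * deriv ψ x) / x := by
    rw [eq_div_iff hx.ne']
    linarith
  rw [hxα, hψ'']
  field_simp
  ring

theorem weight_recursion_general (α : ℝ) (m : ℕ) (x : ℝ) (hx : 0 < x)
    (h1 : lag (-α - 1) m (-x) ≠ 0)
    (h2 : deriv (fun t => lag (-α - 1) m (-t)) x ≠ 0) :
    x ^ α * Real.exp (-x) / (lag (-α - 1) m (-x)) ^ 2
        + (m : ℝ) * (x ^ (α - 1) * Real.exp (-x)
            / (deriv (fun t => lag (-α - 1) m (-t)) x) ^ 2)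
      = -deriv (fun t => t ^ α * Real.exp (-t)
          / (lag (-α - 1) m (-t) * deriv (fun u => lag (-α - 1) m (-u)) t)) x := by
  have hψ : ContDiff ℝ 2 fun t => lag (-α - 1) m (-t) := (contDiff_lag _ _).comp contDiff_neg
  have hode := ode_comp_neg (lag_ode (-α - 1) m) x
  rw [show x + (-α - 1 + 1) = x - α by ring] at hode
  exact add_weight_eq_neg_deriv_of_ode hx (hψ.differentiable two_ne_zero x)
    (hψ.differentiable_deriv_two x) h1 h2 hode

/-- with `ψ(x) = L_m^{-α-1}(-x)`, the weights
`W_m^{III,α}(x) = x^α e^{-x}/ψ(x)²` and `W_{m-1}^{III,α-1}(x) = x^{α-1} e^{-x}/ψ'(x)²`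
satisfy `W_m^{III,α} + m·W_{m-1}^{III,α-1} = -(x^α e^{-x}/(ψ ψ'))'` wherever
`ψ` and `ψ'` are nonzero. -/
theorem weight_recursion (α : ℝ) (m : ℕ) (hm : 1 ≤ m) (x : ℝ) (hx : 0 < x)
    (h1 : lag (-α - 1) m (-x) ≠ 0)
    (h2 : deriv (fun t => lag (-α - 1) m (-t)) x ≠ 0) :
    x ^ α * Real.exp (-x) / (lag (-α - 1) m (-x)) ^ 2
        + (m : ℝ) * (x ^ (α - 1) * Real.exp (-x)
            / (deriv (fun t => lag (-α - 1) m (-t)) x) ^ 2)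
      = -deriv (fun t => t ^ α * Real.exp (-t)
          / (lag (-α - 1) m (-t) * deriv (fun u => lag (-α - 1) m (-u)) t)) x :=
  weight_recursion_general α m x hx h1 h2
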